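/- arXiv:2004.11505 — 3 statements merged into one kernel-verified Lean document; each statement's English description precedes it below -/
import Mathlib

section
/- Let n ≥ 1, let λ be symmetric nonnegative real edge weights on the complete graph with vertex set {1,…,n} (λ_{jk} = λ_{kj} ≥ 0, λ_{jj} = 0), and let x_1,…,x_n be complex numbers. If Re(x_i) > 0 for every i ∈ {1,…,n}, then the matching polynomial μ(x_1,…,x_n) = Σ_{M ∈ 𝓜} (∏_{i not covered by M} x_i) · (∏_{{j,k} ∈ M} λ_{jk}) is different from zero, where 𝓜 is the set of all matchings (sets of pairwise disjoint edges) of the complete graph on {1,…,n}. -/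
open Finset Classical

/-- A matching of the complete graph induced on the vertex set `S ⊆ Fin n`,
represented as a finset of ordered pairs `(j, k)` with `j < k` (each such pair
encoding the unordered edge `{j, k}`), no two of which share a vertex. -/
def IsMatching (n : ℕ) (S : Finset (Fin n)) (M : Finset (Fin n × Fin n)) : Prop :=
  (∀ p ∈ M, p.1 < p.2 ∧ p.1 ∈ S ∧ p.2 ∈ S) ∧
  ∀ p ∈ M, ∀ q ∈ M, p ≠ q → p.1 ≠ q.1 ∧ p.1 ≠ q.2 ∧ p.2 ≠ q.1 ∧ p.2 ≠ q.2

/-- The matching polynomial of the complete graph induced on `S ⊆ Fin n`, with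
edge weights `lam` and vertex variables `x`:
`μ_S = Σ_{M matching of S} (Π_{i ∈ S not covered by M} x i) · (Π_{{j,k} ∈ M} lam j k)`. -/
noncomputable def mu (n : ℕ) (lam : Fin n → Fin n → ℝ) (x : Fin n → ℂ)
    (S : Finset (Fin n)) : ℂ :=
  ∑ M ∈ univ.filter (fun M : Finset (Fin n × Fin n) => IsMatching n S M),
    (∏ v ∈ S.filter (fun v => ∀ p ∈ M, v ≠ p.1 ∧ v ≠ p.2), x v) *
    ∏ p ∈ M, (lam p.1 p.2 : ℂ)

namespace HLaux

variable {n : ℕ}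

/-- The ordered pair encoding the edge `{v, k}`. -/
def edg (v k : Fin n) : Fin n × Fin n := if v < k then (v, k) else (k, v)

lemma edg_spec {v k : Fin n} (h : v ≠ k) :
    (edg v k = (v, k) ∧ v < k) ∨ (edg v k = (k, v) ∧ k < v) := by
  rcases lt_or_gt_of_ne h with h1 | h1
  · exact Or.inl ⟨if_pos h1, h1⟩
  · exact Or.inr ⟨if_neg (not_lt.2 h1.le), h1⟩

lemma edg_ends {v k : Fin n} (h : v ≠ k) :
    ((edg v k).1 = v ∧ (edg v k).2 = k) ∨ ((edg v k).1 = k ∧ (edg v k).2 = v) := by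
  rcases edg_spec h with ⟨he, _⟩ | ⟨he, _⟩ <;> simp [he]

lemma edg_lt {v k : Fin n} (h : v ≠ k) : (edg v k).1 < (edg v k).2 := by
  rcases edg_spec h with ⟨he, h1⟩ | ⟨he, h1⟩ <;> simp [he, h1]

lemma edg_inj {v k k' : Fin n} (hk : v ≠ k) (hk' : v ≠ k') (h : edg v k = edg v k') :
    k = k' := by
  rcases edg_spec hk with ⟨he, _⟩ | ⟨he, _⟩ <;> rcases edg_spec hk' with ⟨he', _⟩ | ⟨he', _⟩ <;>
    rw [he, he'] at h <;> simp [Prod.ext_iff] at h <;> tauto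

lemma mu_empty (lam : Fin n → Fin n → ℝ) (x : Fin n → ℂ) : mu n lam x ∅ = 1 := by
  have h : (univ.filter (fun M : Finset (Fin n × Fin n) => IsMatching n ∅ M)) = {∅} := by
    ext M
    simp only [mem_filter, mem_univ, true_and, mem_singleton]
    constructor
    · rintro ⟨h1, _⟩
      ext p
      simp only [Finset.notMem_empty, iff_false]
      intro hp
      exact absurd (h1 p hp).2.1 (Finset.notMem_empty _)
    · rintro rfl
      exact ⟨fun p hp => absurd hp (Finset.notMem_empty _),
             fun p hp _ _ _ => absurd hp (Finset.notMem_empty _)⟩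
  rw [mu, h]
  simp

lemma mu_rec (lam : Fin n → Fin n → ℝ) (hsymm : ∀ j k, lam j k = lam k j)
    (x : Fin n → ℂ) (S : Finset (Fin n)) {v : Fin n} (hv : v ∈ S) :
    mu n lam x S = x v * mu n lam x (S.erase v)
      + ∑ k ∈ S.erase v, (lam v k : ℂ) * mu n lam x ((S.erase v).erase k) := by
  classical
  set f : Finset (Fin n × Fin n) → ℂ := fun M =>
    (∏ w ∈ S.filter (fun w => ∀ p ∈ M, w ≠ p.1 ∧ w ≠ p.2), x w) *
      ∏ p ∈ M, (lam p.1 p.2 : ℂ) with hf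
  set A : Finset (Finset (Fin n × Fin n)) :=
    univ.filter (fun M => IsMatching n S M) with hA
  set P : Finset (Fin n × Fin n) → Prop := fun M => ∀ p ∈ M, v ≠ p.1 ∧ v ≠ p.2 with hP
  have hsplit : mu n lam x S
      = ∑ M ∈ A.filter P, f M + ∑ M ∈ A.filter (fun M => ¬ P M), f M := by
    rw [mu, Finset.sum_filter_add_sum_filter_not]
  -- Part 1: matchings avoiding v
  have hpart1 : ∑ M ∈ A.filter P, f M = x v * mu n lam x (S.erase v) := by
    have hA0 : A.filter P
        = univ.filter (fun M : Finset (Fin n × Fin n) => IsMatching n (S.erase v) M) := by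
      ext M
      simp only [hA, hP, filter_filter, mem_filter, mem_univ, true_and]
      constructor
      · rintro ⟨⟨h1, h2⟩, hPv⟩
        refine ⟨fun p hp => ⟨(h1 p hp).1, ?_, ?_⟩, h2⟩
        · exact mem_erase.2 ⟨fun h => (hPv p hp).1 h.symm, (h1 p hp).2.1⟩
        · exact mem_erase.2 ⟨fun h => (hPv p hp).2 h.symm, (h1 p hp).2.2⟩
      · rintro ⟨h1, h2⟩
        refine ⟨⟨fun p hp => ⟨(h1 p hp).1, mem_of_mem_erase (h1 p hp).2.1,
          mem_of_mem_erase (h1 p hp).2.2⟩, h2⟩, fun p hp =>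
          ⟨fun h => (mem_erase.1 (h1 p hp).2.1).1 h.symm,
           fun h => (mem_erase.1 (h1 p hp).2.2).1 h.symm⟩⟩
    rw [hA0, mu, mul_sum]
    apply Finset.sum_congr rfl
    intro M hM
    simp only [mem_filter, mem_univ, true_and] at hM
    have hPv : ∀ p ∈ M, v ≠ p.1 ∧ v ≠ p.2 := fun p hp =>
      ⟨fun h => (mem_erase.1 (hM.1 p hp).2.1).1 h.symm,
       fun h => (mem_erase.1 (hM.1 p hp).2.2).1 h.symm⟩
    have hfe : (S.erase v).filter (fun w => ∀ p ∈ M, w ≠ p.1 ∧ w ≠ p.2)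
        = (S.filter (fun w => ∀ p ∈ M, w ≠ p.1 ∧ w ≠ p.2)).erase v :=
      filter_erase _ v S
    have hvmem : v ∈ S.filter (fun w => ∀ p ∈ M, w ≠ p.1 ∧ w ≠ p.2) :=
      mem_filter.2 ⟨hv, hPv⟩
    rw [hf]
    simp only
    rw [hfe, ← Finset.mul_prod_erase _ x hvmem, mul_assoc]
  -- Part 2: matchings covering v
  have hpart2 : ∑ M ∈ A.filter (fun M => ¬ P M), f M
      = ∑ k ∈ S.erase v, (lam v k : ℂ) * mu n lam x ((S.erase v).erase k) := by
    have hcov : A.filter (fun M => ¬ P M)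
        = (S.erase v).biUnion (fun k => A.filter (fun M => edg v k ∈ M)) := by
      ext M
      simp only [mem_filter, mem_biUnion]
      constructor
      · rintro ⟨hMA, hnP⟩
        have hM : IsMatching n S M := (mem_filter.1 hMA).2
        obtain ⟨p, hp, hvp⟩ : ∃ p ∈ M, v = p.1 ∨ v = p.2 := by
          by_contra hcon
          push_neg at hcon
          exact hnP (fun p hp => (hcon p hp))
        have hlt := (hM.1 p hp).1
        rcases hvp with h | h
        · -- v = p.1, other endpoint k = p.2
          refine ⟨p.2, mem_erase.2 ⟨?_, (hM.1 p hp).2.2⟩, hMA, ?_⟩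
          · intro hc; rw [hc, ← h] at hlt; exact lt_irrefl _ hlt
          · have hvk : v < p.2 := h ▸ hlt
            have : edg v p.2 = (v, p.2) := if_pos hvk
            rw [this]; rw [show (v, p.2) = p from Prod.ext h rfl] at *
            exact hp
        · -- v = p.2, other endpoint k = p.1
          refine ⟨p.1, mem_erase.2 ⟨?_, (hM.1 p hp).2.1⟩, hMA, ?_⟩
          · intro hc; rw [hc, ← h] at hlt; exact lt_irrefl _ hlt
          · have hvk : p.1 < v := h ▸ hlt
            have : edg v p.1 = (p.1, v) := if_neg (not_lt.2 hvk.le)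
            rw [this]; rw [show (p.1, v) = p from Prod.ext rfl h] at *
            exact hp
      · rintro ⟨k, hk, hMA, he⟩
        refine ⟨hMA, ?_⟩
        have hvk : v ≠ k := fun h => (mem_erase.1 hk).1 h.symm
        intro hPM
        rcases edg_ends hvk with ⟨h1, _⟩ | ⟨_, h2⟩
        · exact (hPM _ he).1 h1.symm
        · exact (hPM _ he).2 h2.symm
    rw [hcov, Finset.sum_biUnion]
    · apply Finset.sum_congr rfl
      intro k hk
      have hvk : v ≠ k := fun h => (mem_erase.1 hk).1 h.symm
      have hkS : k ∈ S := mem_of_mem_erase hk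
      set e := edg v k with hedef
      set S'' := (S.erase v).erase k with hS''
      have hvS'' : v ∉ S'' := fun h => (mem_erase.1 (mem_of_mem_erase h)).1 rfl
      have hkS'' : k ∉ S'' := fun h => (mem_erase.1 h).1 rfl
      have hends : (e.1 = v ∧ e.2 = k) ∨ (e.1 = k ∧ e.2 = v) := edg_ends hvk
      -- the bijection
      rw [show (lam v k : ℂ) * mu n lam x S''
          = ∑ M' ∈ univ.filter (fun M' : Finset (Fin n × Fin n) => IsMatching n S'' M'),
            (lam v k : ℂ) * ((∏ w ∈ S''.filter (fun w => ∀ p ∈ M', w ≠ p.1 ∧ w ≠ p.2), x w) *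
              ∏ p ∈ M', (lam p.1 p.2 : ℂ)) from by rw [mu, mul_sum]]
      refine Finset.sum_bij' (fun M _ => M.erase e) (fun M' _ => insert e M')
        ?hi ?hj ?left ?right ?vals
      case hi =>
        intro M hM0
        simp only [hA, mem_filter, mem_univ, true_and] at hM0 ⊢
        obtain ⟨hM, heM⟩ := hM0
        constructor
        · intro q hq
          obtain ⟨hqe, hqM⟩ := mem_erase.1 hq
          obtain ⟨hd1, hd2, hd3, hd4⟩ := hM.2 q hqM e heM hqe
          refine ⟨(hM.1 q hqM).1, ?_, ?_⟩
          · rcases hends with ⟨h1, h2⟩ | ⟨h1, h2⟩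
            · exact mem_erase.2 ⟨h2 ▸ hd2, mem_erase.2 ⟨h1 ▸ hd1, (hM.1 q hqM).2.1⟩⟩
            · exact mem_erase.2 ⟨h1 ▸ hd1, mem_erase.2 ⟨h2 ▸ hd2, (hM.1 q hqM).2.1⟩⟩
          · rcases hends with ⟨h1, h2⟩ | ⟨h1, h2⟩
            · exact mem_erase.2 ⟨h2 ▸ hd4, mem_erase.2 ⟨h1 ▸ hd3, (hM.1 q hqM).2.2⟩⟩
            · exact mem_erase.2 ⟨h1 ▸ hd3, mem_erase.2 ⟨h2 ▸ hd4, (hM.1 q hqM).2.2⟩⟩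
        · intro p hp q hq hpq
          exact hM.2 p (mem_of_mem_erase hp) q (mem_of_mem_erase hq) hpq
      case hj =>
        intro M' hM'0
        simp only [mem_filter, mem_univ, true_and] at hM'0
        have hsub : ∀ q ∈ M', q.1 ≠ v ∧ q.1 ≠ k ∧ q.2 ≠ v ∧ q.2 ≠ k := by
          intro q hq
          obtain ⟨_, hq1, hq2⟩ := hM'0.1 q hq
          exact ⟨(mem_erase.1 (mem_of_mem_erase hq1)).1, (mem_erase.1 hq1).1,
            (mem_erase.1 (mem_of_mem_erase hq2)).1, (mem_erase.1 hq2).1⟩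
        have hdisj : ∀ q ∈ M', e.1 ≠ q.1 ∧ e.1 ≠ q.2 ∧ e.2 ≠ q.1 ∧ e.2 ≠ q.2 := by
          intro q hq
          obtain ⟨hq1v, hq1k, hq2v, hq2k⟩ := hsub q hq
          rcases hends with ⟨h1, h2⟩ | ⟨h1, h2⟩ <;>
            exact ⟨by rw [h1]; first | exact fun h => hq1v h.symm | exact fun h => hq1k h.symm,
                   by rw [h1]; first | exact fun h => hq2v h.symm | exact fun h => hq2k h.symm,
                   by rw [h2]; first | exact fun h => hq1v h.symm | exact fun h => hq1k h.symm,
                   by rw [h2]; first | exact fun h => hq2v h.symm | exact fun h => hq2k h.symm⟩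
        simp only [hA, mem_filter, mem_univ, true_and]
        refine ⟨⟨?_, ?_⟩, mem_insert_self _ _⟩
        · intro p hp
          rcases mem_insert.1 hp with rfl | hp'
          · refine ⟨edg_lt hvk, ?_, ?_⟩ <;>
              rcases hends with ⟨h1, h2⟩ | ⟨h1, h2⟩ <;> simp [h1, h2, hv, hkS]
          · obtain ⟨hlt, hq1, hq2⟩ := hM'0.1 p hp'
            exact ⟨hlt, mem_of_mem_erase (mem_of_mem_erase hq1),
              mem_of_mem_erase (mem_of_mem_erase hq2)⟩
        · intro p hp q hq hpq
          rcases mem_insert.1 hp with rfl | hp' <;> rcases mem_insert.1 hq with rfl | hq'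
          · exact absurd rfl hpq
          · exact hdisj q hq'
          · obtain ⟨h1, h2, h3, h4⟩ := hdisj p hp'
            exact ⟨h1.symm, h3.symm, h2.symm, h4.symm⟩
          · exact hM'0.2 p hp' q hq' hpq
      case left =>
        intro M hM0
        simp only [hA, mem_filter] at hM0
        exact Finset.insert_erase hM0.2
      case right =>
        intro M' hM'0
        simp only [mem_filter, mem_univ, true_and] at hM'0
        have heM' : e ∉ M' := by
          intro hc
          obtain ⟨_, hq1, _⟩ := hM'0.1 e hc
          rcases hends with ⟨h1, _⟩ | ⟨h1, _⟩
          · exact hvS'' (h1 ▸ hq1)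
          · exact hkS'' (h1 ▸ hq1)
        exact Finset.erase_insert heM'
      case vals =>
        intro M hM0
        simp only [hA, mem_filter, mem_univ, true_and] at hM0
        obtain ⟨hM, heM⟩ := hM0
        have hlam : (lam e.1 e.2 : ℂ) = (lam v k : ℂ) := by
          rcases hends with ⟨h1, h2⟩ | ⟨h1, h2⟩
          · rw [h1, h2]
          · rw [h1, h2, hsymm k v]
        have hprodlam : ∏ p ∈ M, (lam p.1 p.2 : ℂ)
            = (lam v k : ℂ) * ∏ p ∈ M.erase e, (lam p.1 p.2 : ℂ) := by
          rw [← Finset.mul_prod_erase M (fun p => (lam p.1 p.2 : ℂ)) heM, hlam]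
        have hvset : S.filter (fun w => ∀ p ∈ M, w ≠ p.1 ∧ w ≠ p.2)
            = S''.filter (fun w => ∀ p ∈ M.erase e, w ≠ p.1 ∧ w ≠ p.2) := by
          ext w
          simp only [mem_filter]
          constructor
          · rintro ⟨hwS, hwC⟩
            obtain ⟨hwe1, hwe2⟩ := hwC e heM
            have hwv : w ≠ v := by
              rcases hends with ⟨h1, _⟩ | ⟨_, h2⟩
              · exact h1 ▸ hwe1
              · exact h2 ▸ hwe2
            have hwk : w ≠ k := by
              rcases hends with ⟨_, h2⟩ | ⟨h1, _⟩
              · exact h2 ▸ hwe2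
              · exact h1 ▸ hwe1
            exact ⟨mem_erase.2 ⟨hwk, mem_erase.2 ⟨hwv, hwS⟩⟩,
              fun p hp => hwC p (mem_of_mem_erase hp)⟩
          · rintro ⟨hwS'', hwC⟩
            have hwv : w ≠ v := (mem_erase.1 (mem_of_mem_erase hwS'')).1
            have hwk : w ≠ k := (mem_erase.1 hwS'').1
            refine ⟨mem_of_mem_erase (mem_of_mem_erase hwS''), ?_⟩
            intro p hp
            by_cases hpe : p = e
            · subst hpe
              rcases hends with ⟨h1, h2⟩ | ⟨h1, h2⟩
              · exact ⟨h1 ▸ hwv, h2 ▸ hwk⟩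
              · exact ⟨h1 ▸ hwk, h2 ▸ hwv⟩
            · exact hwC p (mem_erase.2 ⟨hpe, hp⟩)
        rw [hf]
        simp only
        rw [hvset, hprodlam]
        ring
    -- pairwise disjointness of the biUnion
    · intro k hk k' hk' hkk'
      replace hk : k ∈ S.erase v := hk
      replace hk' : k' ∈ S.erase v := hk'
      have hvk : v ≠ k := fun h => (mem_erase.1 hk).1 h.symm
      have hvk' : v ≠ k' := fun h => (mem_erase.1 hk').1 h.symm
      apply Finset.disjoint_left.2
      intro M hMk hMk'
      simp only [hA, mem_filter, mem_univ, true_and] at hMk hMk'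
      have hne : edg v k ≠ edg v k' := fun h => hkk' (edg_inj hvk hvk' h)
      obtain ⟨hd1, hd2, hd3, hd4⟩ := hMk.1.2 (edg v k) hMk.2 (edg v k') hMk'.2 hne
      rcases edg_ends hvk with ⟨h1, _⟩ | ⟨_, h2⟩ <;>
        rcases edg_ends hvk' with ⟨h1', _⟩ | ⟨_, h2'⟩
      · exact hd1 (h1.trans h1'.symm)
      · exact hd2 (h1.trans h2'.symm)
      · exact hd3 (h2.trans h1'.symm)
      · exact hd4 (h2.trans h2'.symm)
  rw [hsplit, hpart1, hpart2]

lemma mu_key (lam : Fin n → Fin n → ℝ) (x : Fin n → ℂ)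
    (hsymm : ∀ j k, lam j k = lam k j)
    (hnonneg : ∀ j k, 0 ≤ lam j k)
    (hx : ∀ i, 0 < (x i).re) :
    ∀ m : ℕ, ∀ S : Finset (Fin n), S.card ≤ m →
      mu n lam x S ≠ 0 ∧ ∀ v ∈ S, 0 < (mu n lam x S / mu n lam x (S.erase v)).re := by
  intro m
  induction m with
  | zero =>
    intro S hS
    have hSe : S = ∅ := Finset.card_eq_zero.1 (Nat.le_zero.1 hS)
    subst hSe
    exact ⟨by rw [mu_empty]; exact one_ne_zero, by simp⟩
  | succ m ih =>
    intro S hS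
    by_cases hSe : S = ∅
    · subst hSe
      exact ⟨by rw [mu_empty]; exact one_ne_zero, by simp⟩
    · have hratio : ∀ v ∈ S, 0 < (mu n lam x S / mu n lam x (S.erase v)).re := by
        intro v hv
        have hcard : (S.erase v).card ≤ m := by
          rw [Finset.card_erase_of_mem hv]
          omega
        obtain ⟨hne', hrat'⟩ := ih (S.erase v) hcard
        have hrec := mu_rec lam hsymm x S hv
        have key : mu n lam x S / mu n lam x (S.erase v)
            = x v + ∑ k ∈ S.erase v,
                (lam v k : ℂ) *
                  (mu n lam x ((S.erase v).erase k) / mu n lam x (S.erase v)) := by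
          rw [hrec, add_div, mul_div_assoc, div_self hne', mul_one, sum_div]
          congr 1
          exact Finset.sum_congr rfl fun k _ => mul_div_assoc _ _ _
        rw [key]
        have hterm : ∀ k ∈ S.erase v,
            0 ≤ ((lam v k : ℂ) *
              (mu n lam x ((S.erase v).erase k) / mu n lam x (S.erase v))).re := by
          intro k hk
          rw [Complex.re_ofReal_mul]
          apply mul_nonneg (hnonneg v k)
          rw [show mu n lam x ((S.erase v).erase k) / mu n lam x (S.erase v)
              = (mu n lam x (S.erase v) / mu n lam x ((S.erase v).erase k))⁻¹ from
              (inv_div _ _).symm, Complex.inv_re]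
          exact div_nonneg (hrat' k hk).le (Complex.normSq_nonneg _)
        rw [Complex.add_re, Complex.re_sum]
        exact add_pos_of_pos_of_nonneg (hx v) (Finset.sum_nonneg hterm)
      have hne0 : mu n lam x S ≠ 0 := by
        obtain ⟨v, hv⟩ := Finset.nonempty_of_ne_empty hSe
        intro h0
        have h1 := hratio v hv
        rw [h0, zero_div] at h1
        simp at h1
      exact ⟨hne0, hratio⟩

end HLaux

/-- **Heilmann–Lieb theorem, half-plane part.** If all vertex variables have
positive real part, the matching polynomial of the complete graph on `n ≥ 1`
vertices with symmetric nonnegative edge weights is nonzero. -/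
theorem heilmann_lieb_half_plane (n : ℕ) (hn : 1 ≤ n)
    (lam : Fin n → Fin n → ℝ)
    (hsymm : ∀ j k, lam j k = lam k j)
    (hnonneg : ∀ j k, 0 ≤ lam j k)
    (hdiag : ∀ j, lam j j = 0)
    (x : Fin n → ℂ) (hx : ∀ i, 0 < (x i).re) :
    mu n lam x Finset.univ ≠ 0 := by
  exact (HLaux.mu_key lam x hsymm hnonneg hx n Finset.univ (by simp)).1
end

section
/- Let n ≥ 3, let λ be symmetric nonnegative real edge weights on the complete graph with vertex set {1,…,n} (λ_{jk} = λ_{kj} ≥ 0, λ_{jj} = 0), and set B = max over j ∈ {1,…,n} and over subsets A ⊆ {1,…,n}\{j} with |A| = n − 2 of Σ_{k∈A} λ_{jk}. If x_1,…,x_n are complex numbers with |x_i| > 2√B for every i, then the matching polynomial μ(x_1,…,x_n) = Σ_{M ∈ 𝓜} (∏_{i not covered by M} x_i) · (∏_{{j,k} ∈ M} λ_{jk}) is different from zero. -/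
open Finset Classical

/-!
Expanding along a vertex `v` gives `μ_S = x_v μ_{S∖v} + Σ_k λ_{vk} μ_{S∖{v,k}}`. Put `r = √B`.
For a proper subset `S` of the vertices, `Σ_{k ∈ S∖v} λ_{vk} ≤ B = r²`, and induction on `S`
shows `μ_S ≠ 0` and `r |μ_{S∖v}| ≤ |μ_S|`; the latter for `S∖v` gives
`|μ_S| ≥ |x_v| |μ_{S∖v}| - Σ_k λ_{vk} |μ_{S∖{v,k}}| ≥ (|x_v| - r) |μ_{S∖v}| > r |μ_{S∖v}|`.
For the full vertex set the row sum is only bounded by `2B` (split off one term), which still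
leaves `|μ| ≥ (|x_v| - 2r) |μ_{S∖v}| > 0`.
-/

section Matchings

variable {n : ℕ} {S : Finset (Fin n)} {M : Finset (Fin n × Fin n)} {p : Fin n × Fin n}
  {v k : Fin n} {lam : Fin n → Fin n → ℝ} {x : Fin n → ℂ}

/-- The edge `{v, k}` in the encoding used by `IsMatching`. -/
def sortedEdge (v k : Fin n) : Fin n × Fin n := (min v k, max v k)

lemma sortedEdge_fst_lt_snd (h : v ≠ k) : (sortedEdge v k).1 < (sortedEdge v k).2 :=
  min_lt_max.2 h

lemma eq_or_eq_sortedEdge_iff {w : Fin n} :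
    w = (sortedEdge v k).1 ∨ w = (sortedEdge v k).2 ↔ w = v ∨ w = k := by
  rcases le_total v k with h | h
  · simp [sortedEdge, h]
  · simp [sortedEdge, h, or_comm]

lemma sortedEdge_mem (hv : v ∈ S) (hk : k ∈ S) :
    (sortedEdge v k).1 ∈ S ∧ (sortedEdge v k).2 ∈ S := by
  rcases le_total v k with h | h <;> simp [sortedEdge, h, hv, hk]

lemma sortedEdge_injective_right {a b : Fin n} (ha : a ≠ v)
    (h : sortedEdge v a = sortedEdge v b) : a = b := by
  have := (eq_or_eq_sortedEdge_iff (v := v) (k := a) (w := a)).2 (Or.inr rfl)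
  rw [h, eq_or_eq_sortedEdge_iff] at this
  exact this.resolve_left ha

lemma exists_sortedEdge_eq (hp : p.1 < p.2) (hv : v = p.1 ∨ v = p.2) :
    ∃ k, (k = p.1 ∨ k = p.2) ∧ k ≠ v ∧ sortedEdge v k = p := by
  rcases hv with rfl | rfl
  · exact ⟨p.2, Or.inr rfl, hp.ne', by simp [sortedEdge, hp.le]⟩
  · exact ⟨p.1, Or.inl rfl, hp.ne, by simp [sortedEdge, hp.le]⟩

lemma lam_sortedEdge (hsymm : ∀ j k, lam j k = lam k j) :
    lam (sortedEdge v k).1 (sortedEdge v k).2 = lam v k := by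
  rcases le_total v k with h | h
  · simp [sortedEdge, h]
  · simp [sortedEdge, h, hsymm k v]

lemma erase_erase_sortedEdge :
    (S.erase (sortedEdge v k).1).erase (sortedEdge v k).2 = (S.erase v).erase k := by
  rcases le_total v k with h | h
  · simp [sortedEdge, h]
  · simp [sortedEdge, h, erase_right_comm]

lemma IsMatching.eq_of_mem_of_mem (hM : IsMatching n S M) {q : Fin n × Fin n}
    (hp : p ∈ M) (hq : q ∈ M) (hvp : v = p.1 ∨ v = p.2) (hvq : v = q.1 ∨ v = q.2) :
    p = q := by
  by_contra hne
  have := hM.2 p hp q hq hne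
  rcases hvp with rfl | rfl <;> rcases hvq with h | h <;> tauto

lemma isMatching_erase_iff :
    IsMatching n (S.erase v) M ↔ IsMatching n S M ∧ ∀ p ∈ M, v ≠ p.1 ∧ v ≠ p.2 := by
  simp only [IsMatching, mem_erase]
  constructor
  · rintro ⟨hS, hdisj⟩
    exact ⟨⟨fun p hp => ⟨(hS p hp).1, (hS p hp).2.1.2, (hS p hp).2.2.2⟩, hdisj⟩,
      fun p hp => ⟨(hS p hp).2.1.1.symm, (hS p hp).2.2.1.symm⟩⟩
  · rintro ⟨⟨hS, hdisj⟩, hv⟩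
    exact ⟨fun p hp => ⟨(hS p hp).1, ⟨(hv p hp).1.symm, (hS p hp).2.1⟩,
      ⟨(hv p hp).2.symm, (hS p hp).2.2⟩⟩, hdisj⟩

lemma isMatching_insert_iff (hp : p.1 < p.2) (h1 : p.1 ∈ S) (h2 : p.2 ∈ S) (hpM : p ∉ M) :
    IsMatching n S (insert p M) ↔ IsMatching n ((S.erase p.1).erase p.2) M := by
  have hne : ∀ q ∈ M, q ≠ p := fun q hq h => hpM (h ▸ hq)
  simp only [IsMatching, mem_insert, forall_eq_or_imp, mem_erase]
  constructor
  · rintro ⟨⟨-, hS⟩, -, hdisj⟩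
    refine ⟨fun q hq => ?_, fun q hq r hr => (hdisj q hq).2 r hr⟩
    have := (hdisj q hq).1 (hne q hq)
    exact ⟨(hS q hq).1, ⟨by tauto, by tauto, (hS q hq).2.1⟩,
      ⟨by tauto, by tauto, (hS q hq).2.2⟩⟩
  · rintro ⟨hS, hdisj⟩
    refine ⟨⟨⟨hp, h1, h2⟩, fun q hq => ⟨(hS q hq).1, (hS q hq).2.1.2.2, (hS q hq).2.2.2.2⟩⟩,
      ⟨fun h => absurd rfl h, fun q hq _ => ?_⟩, fun q hq => ⟨fun _ => ?_, hdisj q hq⟩⟩ <;>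
    · have := hS q hq
      exact ⟨by tauto, by tauto, by tauto, by tauto⟩

lemma IsMatching.sum_ite_sortedEdge_mem {β : Type*} [AddCommMonoid β] (hM : IsMatching n S M)
    (v : Fin n) (c : β) :
    ∑ k ∈ S.erase v, (if sortedEdge v k ∈ M then c else 0) =
      if ∀ p ∈ M, v ≠ p.1 ∧ v ≠ p.2 then 0 else c := by
  split_ifs with hv
  · refine sum_eq_zero fun k _ => if_neg fun hk => ?_
    have := hv _ hk
    rcases eq_or_eq_sortedEdge_iff.2 (Or.inl rfl : v = v ∨ v = k) with h | h <;> tauto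
  · simp only [not_forall, not_and_or, not_not] at hv
    obtain ⟨p, hp, hvp⟩ := hv
    obtain ⟨k₀, hk₀p, hk₀v, hk₀⟩ := exists_sortedEdge_eq (hM.1 p hp).1 hvp
    have hk₀S : k₀ ∈ S := by rcases hk₀p with rfl | rfl <;> simp [hM.1 p hp]
    rw [sum_eq_single_of_mem k₀ (mem_erase.2 ⟨hk₀v, hk₀S⟩), if_pos (hk₀ ▸ hp)]
    refine fun k hk hkk₀ => if_neg fun hkM => hkk₀ <|
      sortedEdge_injective_right (ne_of_mem_erase hk) (hk₀ ▸ ?_)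
    exact hM.eq_of_mem_of_mem hkM hp (eq_or_eq_sortedEdge_iff.2 (Or.inl rfl)) hvp

noncomputable def matchings (n : ℕ) (S : Finset (Fin n)) : Finset (Finset (Fin n × Fin n)) :=
  univ.filter (fun M => IsMatching n S M)

noncomputable def matchingWeight (lam : Fin n → Fin n → ℝ) (x : Fin n → ℂ) (S : Finset (Fin n))
    (M : Finset (Fin n × Fin n)) : ℂ :=
  (∏ v ∈ S.filter (fun v => ∀ p ∈ M, v ≠ p.1 ∧ v ≠ p.2), x v) * ∏ p ∈ M, (lam p.1 p.2 : ℂ)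

lemma mem_matchings : M ∈ matchings n S ↔ IsMatching n S M := by
  simp [matchings]

lemma mu_eq_sum_matchingWeight :
    mu n lam x S = ∑ M ∈ matchings n S, matchingWeight lam x S M := rfl

lemma matchingWeight_of_forall_ne (hv : v ∈ S) (hM : ∀ p ∈ M, v ≠ p.1 ∧ v ≠ p.2) :
    matchingWeight lam x S M = x v * matchingWeight lam x (S.erase v) M := by
  rw [matchingWeight, matchingWeight, filter_erase, ← mul_prod_erase _ _ (mem_filter.2 ⟨hv, hM⟩),
    mul_assoc]

lemma matchingWeight_insert (hpM : p ∉ M) :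
    matchingWeight lam x S (insert p M) =
      lam p.1 p.2 * matchingWeight lam x ((S.erase p.1).erase p.2) M := by
  have huncov : S.filter (fun w => ∀ q ∈ insert p M, w ≠ q.1 ∧ w ≠ q.2) =
      ((S.erase p.1).erase p.2).filter (fun w => ∀ q ∈ M, w ≠ q.1 ∧ w ≠ q.2) := by
    ext w
    simp only [mem_filter, mem_insert, forall_eq_or_imp, mem_erase]
    tauto
  rw [matchingWeight, matchingWeight, huncov, prod_insert hpM]
  ring

lemma sum_matchingWeight_filter_mem (hp : p.1 < p.2) (h1 : p.1 ∈ S) (h2 : p.2 ∈ S) :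
    ∑ M ∈ (matchings n S).filter (p ∈ ·), matchingWeight lam x S M =
      lam p.1 p.2 * mu n lam x ((S.erase p.1).erase p.2) := by
  have hpM : ∀ M, IsMatching n ((S.erase p.1).erase p.2) M → p ∉ M := fun M hM hpM =>
    ((isMatching_erase_iff.1 hM).2 p hpM).2 rfl
  rw [mu_eq_sum_matchingWeight, mul_sum]
  symm
  refine sum_nbij' (insert p) (erase · p) (fun M hM => ?_) (fun M hM => ?_)
    (fun M hM => erase_insert (hpM M (mem_matchings.1 hM)))
    (fun M hM => insert_erase (mem_filter.1 hM).2)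
    (fun M hM => (matchingWeight_insert (hpM M (mem_matchings.1 hM))).symm)
  · rw [mem_matchings] at hM
    rw [mem_filter, mem_matchings, isMatching_insert_iff hp h1 h2 (hpM M hM)]
    exact ⟨hM, mem_insert_self p M⟩
  · rw [mem_filter, mem_matchings] at hM
    rw [mem_matchings, ← isMatching_insert_iff hp h1 h2 (notMem_erase p M),
      insert_erase hM.2]
    exact hM.1

/-- In a matching of `S`, the vertex `v` is either uncovered or matched to exactly one
`k ∈ S.erase v`. -/
lemma mu_eq_add_sum (hsymm : ∀ j k, lam j k = lam k j) (hv : v ∈ S) :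
    mu n lam x S = x v * mu n lam x (S.erase v) +
      ∑ k ∈ S.erase v, (lam v k : ℂ) * mu n lam x ((S.erase v).erase k) := by
  have hsplit : ∀ M ∈ matchings n S, matchingWeight lam x S M =
      (if ∀ p ∈ M, v ≠ p.1 ∧ v ≠ p.2 then matchingWeight lam x S M else 0) +
        ∑ k ∈ S.erase v, if sortedEdge v k ∈ M then matchingWeight lam x S M else 0 := by
    intro M hM
    rw [(mem_matchings.1 hM).sum_ite_sortedEdge_mem]
    split_ifs <;> simp
  have huncov : (matchings n S).filter (fun M => ∀ p ∈ M, v ≠ p.1 ∧ v ≠ p.2) =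
      matchings n (S.erase v) := by
    ext M
    simp only [mem_filter, mem_matchings, isMatching_erase_iff]
  rw [mu_eq_sum_matchingWeight, sum_congr rfl hsplit, sum_add_distrib, ← sum_filter, huncov,
    sum_comm, mu_eq_sum_matchingWeight, mul_sum]
  congr 1
  · exact sum_congr rfl fun M hM =>
      matchingWeight_of_forall_ne hv ((isMatching_erase_iff.1 (mem_matchings.1 hM)).2)
  · refine sum_congr rfl fun k hk => ?_
    have hvk : v ≠ k := (ne_of_mem_erase hk).symm
    obtain ⟨h1, h2⟩ := sortedEdge_mem hv (mem_of_mem_erase hk)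
    rw [← sum_filter, sum_matchingWeight_filter_mem (sortedEdge_fst_lt_snd hvk) h1 h2,
      lam_sortedEdge hsymm, erase_erase_sortedEdge]

lemma le_norm_mu (hsymm : ∀ j k, lam j k = lam k j) (hnonneg : ∀ j k, 0 ≤ lam j k)
    (hv : v ∈ S) :
    ‖x v‖ * ‖mu n lam x (S.erase v)‖ -
      ∑ k ∈ S.erase v, lam v k * ‖mu n lam x ((S.erase v).erase k)‖ ≤ ‖mu n lam x S‖ := by
  have hsum : ‖∑ k ∈ S.erase v, (lam v k : ℂ) * mu n lam x ((S.erase v).erase k)‖ ≤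
      ∑ k ∈ S.erase v, lam v k * ‖mu n lam x ((S.erase v).erase k)‖ := by
    refine (norm_sum_le _ _).trans (sum_le_sum fun k _ => ?_)
    rw [norm_mul, Complex.norm_real, Real.norm_of_nonneg (hnonneg v k)]
  rw [mu_eq_add_sum hsymm hv, ← norm_mul]
  linarith [norm_sub_le_norm_add (x v * mu n lam x (S.erase v))
    (∑ k ∈ S.erase v, (lam v k : ℂ) * mu n lam x ((S.erase v).erase k))]

lemma mu_empty : mu n lam x ∅ = 1 := by
  have : matchings n ∅ = {∅} := by
    ext M
    simp only [mem_matchings, IsMatching, notMem_empty, and_false, mem_singleton]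
    exact ⟨fun h => eq_empty_iff_forall_notMem.2 h.1, by rintro rfl; simp⟩
  simp [mu_eq_sum_matchingWeight, this, matchingWeight]

end Matchings

lemma sum_mul_le_of_sum_le_mul {ι : Type*} {s : Finset ι} {w a : ι → ℝ} {r c b : ℝ}
    (hr : 0 ≤ r) (hc : 0 ≤ c) (hb : 0 ≤ b) (hw : ∀ i ∈ s, 0 ≤ w i)
    (hsum : ∑ i ∈ s, w i ≤ r * c) (ha : ∀ i ∈ s, r * a i ≤ b) :
    ∑ i ∈ s, w i * a i ≤ c * b := by
  rcases hr.eq_or_lt with rfl | hr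
  · have hw0 : ∀ i ∈ s, w i = 0 :=
      (sum_eq_zero_iff_of_nonneg hw).1 (le_antisymm (by simpa using hsum) (sum_nonneg hw))
    rw [sum_eq_zero fun i hi => by rw [hw0 i hi, zero_mul]]
    positivity
  · refine le_of_mul_le_mul_left ?_ hr
    calc r * ∑ i ∈ s, w i * a i = ∑ i ∈ s, w i * (r * a i) := by
          rw [mul_sum]; exact sum_congr rfl fun i _ => by ring
      _ ≤ ∑ i ∈ s, w i * b := sum_le_sum fun i hi => mul_le_mul_of_nonneg_left (ha i hi) (hw i hi)
      _ = (∑ i ∈ s, w i) * b := (sum_mul _ _ _).symm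
      _ ≤ r * c * b := mul_le_mul_of_nonneg_right hsum hb
      _ = r * (c * b) := mul_assoc _ _ _

section Bounds

variable {n : ℕ} {S : Finset (Fin n)} {v : Fin n} {lam : Fin n → Fin n → ℝ} {x : Fin n → ℂ}

lemma mul_norm_erase_le_norm_mu (hsymm : ∀ j k, lam j k = lam k j) (hnonneg : ∀ j k, 0 ≤ lam j k)
    (hv : v ∈ S) {r s : ℝ} (hr : 0 ≤ r) (hs : 0 ≤ s) (hrow : ∑ k ∈ S.erase v, lam v k ≤ r * s)
    (hratio : ∀ k ∈ S.erase v,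
      r * ‖mu n lam x ((S.erase v).erase k)‖ ≤ ‖mu n lam x (S.erase v)‖) :
    (‖x v‖ - s) * ‖mu n lam x (S.erase v)‖ ≤ ‖mu n lam x S‖ := by
  have := sum_mul_le_of_sum_le_mul hr hs (norm_nonneg _) (fun k _ => hnonneg v k) hrow hratio
  linarith [le_norm_mu (x := x) hsymm hnonneg hv]

theorem mu_ne_zero_and_mul_norm_erase_le (hsymm : ∀ j k, lam j k = lam k j)
    (hnonneg : ∀ j k, 0 ≤ lam j k) {r : ℝ} (hr : 0 ≤ r) (hx : ∀ v ∈ S, 2 * r < ‖x v‖)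
    (hrow : ∀ v ∈ S, ∑ k ∈ S.erase v, lam v k ≤ r * r) :
    mu n lam x S ≠ 0 ∧ ∀ v ∈ S, r * ‖mu n lam x (S.erase v)‖ ≤ ‖mu n lam x S‖ := by
  induction S using Finset.strongInduction with
  | H S ih =>
  have hstep : ∀ v ∈ S, mu n lam x (S.erase v) ≠ 0 ∧
      (‖x v‖ - r) * ‖mu n lam x (S.erase v)‖ ≤ ‖mu n lam x S‖ := by
    intro v hv
    have hrow' : ∀ u ∈ S.erase v, ∑ k ∈ (S.erase v).erase u, lam u k ≤ r * r := fun u hu =>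
      (sum_le_sum_of_subset_of_nonneg (erase_subset_erase u (erase_subset v S))
        fun k _ _ => hnonneg u k).trans (hrow u (mem_of_mem_erase hu))
    obtain ⟨hne, hratio⟩ := ih (S.erase v) (erase_ssubset hv)
      (fun u hu => hx u (mem_of_mem_erase hu)) hrow'
    exact ⟨hne, mul_norm_erase_le_norm_mu hsymm hnonneg hv hr hr (hrow v hv) hratio⟩
  rcases S.eq_empty_or_nonempty with rfl | ⟨v, hv⟩
  · simp [mu_empty]
  refine ⟨fun h0 => ?_, fun u hu => ?_⟩
  · obtain ⟨hne, hge⟩ := hstep v hv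
    have hpos : 0 < (‖x v‖ - r) * ‖mu n lam x (S.erase v)‖ :=
      mul_pos (by linarith [hx v hv]) (norm_pos_iff.2 hne)
    rw [h0, norm_zero] at hge
    linarith
  · exact (mul_le_mul_of_nonneg_right (by linarith [hx u hu]) (norm_nonneg _)).trans (hstep u hu).2

lemma sum_le_of_isGreatest (hnonneg : ∀ j k, 0 ≤ lam j k) {B : ℝ}
    (hB : IsGreatest {s : ℝ | ∃ j : Fin n, ∃ A : Finset (Fin n),
        A ⊆ Finset.univ \ {j} ∧ A.card = n - 2 ∧ s = ∑ k ∈ A, lam j k} B)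
    {T : Finset (Fin n)} (hvT : v ∉ T) (hT : T.card ≤ n - 2) :
    ∑ k ∈ T, lam v k ≤ B := by
  obtain ⟨A, hTA, hA, hAcard⟩ := exists_subsuperset_card_eq
    (s := T) (t := univ \ {v}) (by simpa [subset_iff] using fun h => hvT h) hT
    (by rw [card_sdiff_of_subset (subset_univ _)]; simp; omega)
  exact (sum_le_sum_of_subset_of_nonneg hTA fun k _ _ => hnonneg v k).trans
    (hB.2 ⟨v, A, hA, hAcard, rfl⟩)

lemma card_univ_erase_erase {u : Fin n} (h : u ≠ v) : ((univ.erase v).erase u).card = n - 2 := by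
  rw [card_erase_of_mem (mem_erase.2 ⟨h, mem_univ u⟩), card_erase_of_mem (mem_univ v), card_fin]
  omega

lemma sum_erase_le_two_mul_of_isGreatest (hn : 3 ≤ n) (hnonneg : ∀ j k, 0 ≤ lam j k) {B : ℝ}
    (hB : IsGreatest {s : ℝ | ∃ j : Fin n, ∃ A : Finset (Fin n),
        A ⊆ Finset.univ \ {j} ∧ A.card = n - 2 ∧ s = ∑ k ∈ A, lam j k} B) (v : Fin n) :
    ∑ k ∈ univ.erase v, lam v k ≤ 2 * B := by
  obtain ⟨k, hk⟩ : (univ.erase v).Nonempty := by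
    rw [← card_pos, card_erase_of_mem (mem_univ v), card_univ, Fintype.card_fin]
    omega
  have hsingle : lam v k ≤ B := by
    simpa using sum_le_of_isGreatest hnonneg hB (T := {k})
      (by simpa using (ne_of_mem_erase hk).symm) (by simp; omega)
  have hrest := sum_le_of_isGreatest hnonneg hB
    (notMem_mono (erase_subset k _) (notMem_erase v _)) (card_univ_erase_erase (ne_of_mem_erase hk)).le
  rw [← add_sum_erase _ _ hk, two_mul]
  exact add_le_add hsingle hrest

end Bounds

theorem heilmann_lieb_disk_general (n : ℕ) (hn : 3 ≤ n)
    (lam : Fin n → Fin n → ℝ)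
    (hsymm : ∀ j k, lam j k = lam k j)
    (hnonneg : ∀ j k, 0 ≤ lam j k)
    (B : ℝ)
    (hB : IsGreatest {s : ℝ | ∃ j : Fin n, ∃ A : Finset (Fin n),
        A ⊆ Finset.univ \ {j} ∧ A.card = n - 2 ∧ s = ∑ k ∈ A, lam j k} B)
    (x : Fin n → ℂ) (hx : ∀ i, 2 * Real.sqrt B < ‖x i‖) :
    mu n lam x Finset.univ ≠ 0 := by
  have hB0 : 0 ≤ B := by
    obtain ⟨j, A, -, -, rfl⟩ := hB.1
    exact sum_nonneg fun k _ => hnonneg j k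
  have hsq : √B * √B = B := Real.mul_self_sqrt hB0
  let v : Fin n := ⟨0, by omega⟩
  have hrow : ∀ u ∈ univ.erase v, ∑ k ∈ (univ.erase v).erase u, lam u k ≤ √B * √B :=
    fun u hu => (sum_le_of_isGreatest hnonneg hB (notMem_erase u _)
      (card_univ_erase_erase (ne_of_mem_erase hu)).le).trans_eq hsq.symm
  obtain ⟨hne, hratio⟩ := mu_ne_zero_and_mul_norm_erase_le hsymm hnonneg (Real.sqrt_nonneg B)
    (fun u _ => hx u) hrow
  have hge := mul_norm_erase_le_norm_mu hsymm hnonneg (mem_univ v) (Real.sqrt_nonneg B)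
    (by positivity : 0 ≤ 2 * √B)
    (by linarith [sum_erase_le_two_mul_of_isGreatest hn hnonneg hB v]) hratio
  exact norm_pos_iff.1 ((mul_pos (sub_pos.2 (hx v)) (norm_pos_iff.2 hne)).trans_le hge)

/-- **Heilmann–Lieb theorem, disk part.** For `n ≥ 3`, let `B` be the maximum over
vertices `j` and subsets `A ⊆ {1,…,n}∖{j}` with `|A| = n - 2` of `Σ_{k ∈ A} lam j k`.
If `|x i| > 2√B` for every `i`, then the matching polynomial is nonzero. -/
theorem heilmann_lieb_disk (n : ℕ) (hn : 3 ≤ n)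
    (lam : Fin n → Fin n → ℝ)
    (hsymm : ∀ j k, lam j k = lam k j)
    (hnonneg : ∀ j k, 0 ≤ lam j k)
    (hdiag : ∀ j, lam j j = 0)
    (B : ℝ)
    (hB : IsGreatest {s : ℝ | ∃ j : Fin n, ∃ A : Finset (Fin n),
        A ⊆ Finset.univ \ {j} ∧ A.card = n - 2 ∧ s = ∑ k ∈ A, lam j k} B)
    (x : Fin n → ℂ) (hx : ∀ i, 2 * Real.sqrt B < ‖x i‖) :
    mu n lam x Finset.univ ≠ 0 :=
  heilmann_lieb_disk_general n hn lam hsymm hnonneg B hB x hx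
end

section
/- Let m ≥ 0, let B > 0 be a real number, let λ_1,…,λ_m ≥ 0 be nonnegative real numbers with Σ_{k=1}^m λ_k ≤ B, let x be a complex number with |x| > 2√B, and let z_1,…,z_m be complex numbers with |z_k| > √B for every k. Then | x + Σ_{k=1}^m λ_k / z_k | > √B. -/
/-! Each term `λ_k / z_k` has norm at most `λ_k / √B`, so the branch sum lies in the closed disk
of radius `B / √B = √B`; the reverse triangle inequality then gives
`‖x + Σ_k λ_k / z_k‖ ≥ ‖x‖ - √B > √B`. -/

theorem norm_sum_div_le_sum_norm_div {ι 𝕜 : Type*} [NormedDivisionRing 𝕜] (s : Finset ι)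
    (a z : ι → 𝕜) {r : ℝ} (hr : 0 < r) (hz : ∀ k ∈ s, r ≤ ‖z k‖) :
    ‖∑ k ∈ s, a k / z k‖ ≤ (∑ k ∈ s, ‖a k‖) / r :=
  calc ‖∑ k ∈ s, a k / z k‖
      ≤ ∑ k ∈ s, ‖a k / z k‖ := norm_sum_le _ _
    _ ≤ ∑ k ∈ s, ‖a k‖ / r := Finset.sum_le_sum fun k hk => by
        rw [norm_div]
        exact div_le_div_of_nonneg_left (norm_nonneg _) hr (hz k hk)
    _ = (∑ k ∈ s, ‖a k‖) / r := (Finset.sum_div ..).symm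

/-- Disk invariance of the branched continued-fraction maps: if `B > 0`,
`λ_k ≥ 0` with `Σ_k λ_k ≤ B`, `|x| > 2√B`, and `|z_k| > √B` for all `k`,
then `|x + Σ_k λ_k / z_k| > √B`. -/
theorem disk_invariance (m : ℕ) (B : ℝ) (hB : 0 < B)
    (lam : Fin m → ℝ) (hlam : ∀ k, 0 ≤ lam k) (hsum : ∑ k, lam k ≤ B)
    (x : ℂ) (hx : 2 * Real.sqrt B < ‖x‖)
    (z : Fin m → ℂ) (hz : ∀ k, Real.sqrt B < ‖z k‖) :
    Real.sqrt B < ‖x + ∑ k, (lam k : ℂ) / z k‖ := by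
  have hsqrtB : 0 < Real.sqrt B := Real.sqrt_pos.mpr hB
  have hbranch : ‖∑ k, (lam k : ℂ) / z k‖ ≤ Real.sqrt B :=
    calc ‖∑ k, (lam k : ℂ) / z k‖
        ≤ (∑ k, ‖(lam k : ℂ)‖) / Real.sqrt B :=
          norm_sum_div_le_sum_norm_div _ _ _ hsqrtB fun k _ => (hz k).le
      _ = (∑ k, lam k) / Real.sqrt B := by
          simp only [Complex.norm_of_nonneg (hlam _)]
      _ ≤ B / Real.sqrt B := div_le_div_of_nonneg_right hsum hsqrtB.le
      _ = Real.sqrt B := Real.div_sqrt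
  linarith [norm_sub_le_norm_add x (∑ k, (lam k : ℂ) / z k)]
end
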